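/- For all a > 0 and all λ > 0, the integral over (0,∞) of e^{−λx} · (1/(4√π)) x^{−5/2} e^{−a²/(4x)} (a² − 2x) dx equals √λ · e^{−a√λ}. -/

import Mathlib

/-!
Since `h_a = π^{-1/2} (d/dx) (x^{-1/2} e^{-a²/(4x)})` and the boundary terms vanish, integration
by parts gives `𝓛_λ(h_a) = λ π^{-1/2} ∫₀^∞ e^{-λx} x^{-1/2} e^{-a²/(4x)} dx`. With `s = √λ` and
`β = a/2`, the substitutions `u = s√x ± β/√x` turn this classical integral into Gaussian ones,
which yields an explicit primitive in terms of `t ↦ ∫₀^t e^{-u²} du` and the value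
`√π / s · e^{-2sβ}`.
-/

open Real MeasureTheory Set Filter Topology
open scoped Nat

noncomputable def gaussianPrimitive (t : ℝ) : ℝ := ∫ u in (0 : ℝ)..t, exp (-u ^ 2)

theorem hasDerivAt_gaussianPrimitive (t : ℝ) :
    HasDerivAt gaussianPrimitive (exp (-t ^ 2)) t :=
  ((by fun_prop : Continuous fun u : ℝ => exp (-u ^ 2)).integral_hasStrictDerivAt 0 t).hasDerivAt

theorem gaussianPrimitive_neg (t : ℝ) : gaussianPrimitive (-t) = -gaussianPrimitive t := by
  have h := intervalIntegral.integral_comp_neg (a := 0) (b := -t) fun u : ℝ => exp (-u ^ 2)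
  simp only [neg_sq, neg_zero, neg_neg] at h
  rw [gaussianPrimitive, gaussianPrimitive, h, intervalIntegral.integral_symm]

theorem tendsto_gaussianPrimitive_atTop :
    Tendsto gaussianPrimitive atTop (𝓝 (√π / 2)) := by
  have hint : IntegrableOn (fun u : ℝ => exp (-u ^ 2)) (Ioi 0) := by
    simpa using (integrable_exp_neg_mul_sq one_pos).integrableOn
  have hval : ∫ u in Ioi (0 : ℝ), exp (-u ^ 2) = √π / 2 := by
    simpa using integral_gaussian_Ioi 1
  exact hval ▸ intervalIntegral_tendsto_integral_Ioi 0 hint tendsto_id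

theorem tendsto_gaussianPrimitive_atBot :
    Tendsto gaussianPrimitive atBot (𝓝 (-(√π / 2))) := by
  refine (tendsto_gaussianPrimitive_atTop.comp tendsto_neg_atBot_atTop).neg.congr fun t => ?_
  simp [gaussianPrimitive_neg]

theorem tendsto_sqrt_nhdsGT_zero : Tendsto (√·) (𝓝[>] 0) (𝓝[>] 0) := by
  refine tendsto_nhdsWithin_iff.2 ⟨?_, eventually_nhdsWithin_of_forall fun x hx => sqrt_pos.2 hx⟩
  simpa using continuous_sqrt.continuousWithinAt.tendsto (s := Ioi 0) (x := 0)

theorem hasDerivAt_mul_sqrt_add_div_sqrt (s γ : ℝ) {x : ℝ} (hx : 0 < x) :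
    HasDerivAt (fun x => s * √x + γ / √x) ((s - γ / x) / (2 * √x)) x := by
  have hsqrt := hasDerivAt_sqrt hx.ne'
  refine ((hsqrt.const_mul s).add ((hasDerivAt_const x γ).div hsqrt
    (sqrt_ne_zero'.2 hx))).congr_deriv ?_
  field_simp
  rw [sq_sqrt hx.le]
  ring

theorem tendsto_mul_sqrt_add_div_sqrt_atTop {s : ℝ} (hs : 0 < s) (γ : ℝ) :
    Tendsto (fun x => s * √x + γ / √x) atTop atTop := by
  refine (tendsto_sqrt_atTop.const_mul_atTop hs).atTop_add (C := 0) ?_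
  simpa [div_eq_mul_inv] using tendsto_sqrt_atTop.inv_tendsto_atTop.const_mul γ

theorem tendsto_mul_sqrt_add_div_sqrt_nhdsGT_zero_atTop (s : ℝ) {γ : ℝ} (hγ : 0 < γ) :
    Tendsto (fun x => s * √x + γ / √x) (𝓝[>] 0) atTop := by
  refine Tendsto.add_atTop (C := 0) ?_ ?_
  · simpa using (continuous_sqrt.tendsto 0).mono_left nhdsWithin_le_nhds |>.const_mul s
  · simpa [div_eq_mul_inv] using
      (tendsto_inv_nhdsGT_zero.comp tendsto_sqrt_nhdsGT_zero).const_mul_atTop hγ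

theorem tendsto_mul_sqrt_add_div_sqrt_nhdsGT_zero_atBot (s : ℝ) {γ : ℝ} (hγ : γ < 0) :
    Tendsto (fun x => s * √x + γ / √x) (𝓝[>] 0) atBot := by
  refine Tendsto.add_atBot (C := 0) ?_ ?_
  · simpa using (continuous_sqrt.tendsto 0).mono_left nhdsWithin_le_nhds |>.const_mul s
  · simpa [div_eq_mul_inv] using
      (tendsto_inv_nhdsGT_zero.comp tendsto_sqrt_nhdsGT_zero).const_mul_atTop_of_neg hγ

theorem hasDerivAt_exp_mul_gaussianPrimitive (s γ : ℝ) {x : ℝ} (hx : 0 < x) :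
    HasDerivAt (fun x => exp (2 * s * γ) * gaussianPrimitive (s * √x + γ / √x))
      (exp (-s ^ 2 * x - γ ^ 2 / x) * ((s - γ / x) / (2 * √x))) x := by
  refine (((hasDerivAt_gaussianPrimitive _).comp x
    (hasDerivAt_mul_sqrt_add_div_sqrt s γ hx)).const_mul (exp (2 * s * γ))).congr_deriv ?_
  have hsq : (s * √x + γ / √x) ^ 2 = s ^ 2 * x + γ ^ 2 / x + 2 * s * γ := by
    field_simp
    rw [sq_sqrt hx.le]
    ring
  rw [hsq, ← mul_assoc, ← exp_add]
  ring_nf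

noncomputable def laplacePrimitive (s β x : ℝ) : ℝ :=
  (exp (2 * s * β) * gaussianPrimitive (s * √x + β / √x) +
    exp (2 * s * -β) * gaussianPrimitive (s * √x + -β / √x)) / s

theorem hasDerivAt_laplacePrimitive {s : ℝ} (hs : s ≠ 0) (β : ℝ) {x : ℝ} (hx : 0 < x) :
    HasDerivAt (laplacePrimitive s β)
      (exp (-s ^ 2 * x) * (x ^ (-(1 / 2 : ℝ)) * exp (-β ^ 2 / x))) x := by
  refine (((hasDerivAt_exp_mul_gaussianPrimitive s β hx).add
    (hasDerivAt_exp_mul_gaussianPrimitive s (-β) hx)).div_const s).congr_deriv ?_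
  simp only [rpow_neg hx.le, ← sqrt_eq_rpow, neg_sq, sub_eq_add_neg (-s ^ 2 * x), exp_add,
    neg_div]
  field_simp
  ring

theorem tendsto_laplacePrimitive_atTop {s : ℝ} (hs : 0 < s) (β : ℝ) :
    Tendsto (laplacePrimitive s β) atTop
      (𝓝 ((exp (2 * s * β) * (√π / 2) + exp (2 * s * -β) * (√π / 2)) / s)) :=
  (((tendsto_gaussianPrimitive_atTop.comp (tendsto_mul_sqrt_add_div_sqrt_atTop hs β)).const_mul
    _).add ((tendsto_gaussianPrimitive_atTop.comp
      (tendsto_mul_sqrt_add_div_sqrt_atTop hs (-β))).const_mul _)).div_const s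

theorem tendsto_laplacePrimitive_nhdsGT_zero (s : ℝ) {β : ℝ} (hβ : 0 < β) :
    Tendsto (laplacePrimitive s β) (𝓝[>] 0)
      (𝓝 ((exp (2 * s * β) * (√π / 2) + exp (2 * s * -β) * -(√π / 2)) / s)) :=
  (((tendsto_gaussianPrimitive_atTop.comp
    (tendsto_mul_sqrt_add_div_sqrt_nhdsGT_zero_atTop s hβ)).const_mul _).add
    ((tendsto_gaussianPrimitive_atBot.comp
      (tendsto_mul_sqrt_add_div_sqrt_nhdsGT_zero_atBot s (neg_neg_of_pos hβ))).const_mul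
        _)).div_const s

theorem exp_neg_div_le {b x : ℝ} (hb : 0 < b) (hx : 0 < x) (n : ℕ) :
    exp (-b / x) ≤ n ! / b ^ n * x ^ n := by
  rw [neg_div, exp_neg]
  calc (exp (b / x))⁻¹ ≤ ((b / x) ^ n / n !)⁻¹ :=
        inv_anti₀ (by positivity) (pow_div_factorial_le_exp _ (div_pos hb hx).le n)
    _ = n ! / b ^ n * x ^ n := by rw [div_pow]; field_simp

theorem integrableOn_exp_neg_mul_rpow_mul_exp_neg_div (p : ℝ) {c b : ℝ} (hc : 0 < c)
    (hb : 0 < b) :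
    IntegrableOn (fun x => exp (-c * x) * (x ^ p * exp (-b / x))) (Ioi 0) := by
  set n := ⌈-p⌉₊
  have hdom : IntegrableOn (fun x => n ! / b ^ n * (x ^ (p + n) * exp (-c * x))) (Ioi 0) := by
    have hpn : -1 < p + n := by linarith [Nat.le_ceil (-p)]
    have h : IntegrableOn (fun x => x ^ (p + n) * exp (-c * x)) (Ioi 0) := by
      simpa using integrableOn_rpow_mul_exp_neg_mul_rpow (p := 1) hpn one_pos hc
    exact h.const_mul _
  refine hdom.mono' ((by fun_prop : Measurable _).aestronglyMeasurable) ?_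
  filter_upwards [ae_restrict_mem measurableSet_Ioi] with x (hx : 0 < x)
  rw [norm_of_nonneg (by positivity), rpow_add hx, rpow_natCast]
  calc exp (-c * x) * (x ^ p * exp (-b / x))
      ≤ exp (-c * x) * (x ^ p * (n ! / b ^ n * x ^ n)) := by
        gcongr; exact exp_neg_div_le hb hx n
    _ = _ := by ring

theorem integral_Ioi_of_hasDerivAt_of_tendsto_nhdsGT {f f' : ℝ → ℝ} {a m₀ m : ℝ}
    (hderiv : ∀ x ∈ Ioi a, HasDerivAt f (f' x) x) (hint : IntegrableOn f' (Ioi a))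
    (h₀ : Tendsto f (𝓝[>] a) (𝓝 m₀)) (htop : Tendsto f atTop (𝓝 m)) :
    ∫ x in Ioi a, f' x = m - m₀ := by
  simpa using integral_Ioi_deriv_mul_eq_sub (u := 1) (u' := 0)
    (fun x _ => hasDerivAt_const x 1) hderiv (by simpa using hint) (by simpa using h₀)
    (by simpa using htop)

theorem integral_exp_neg_sq_mul_rpow_neg_half_mul_exp_neg_sq_div {s β : ℝ} (hs : 0 < s)
    (hβ : 0 < β) :
    ∫ x in Ioi 0, exp (-s ^ 2 * x) * (x ^ (-(1 / 2 : ℝ)) * exp (-β ^ 2 / x)) =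
      √π / s * exp (-(2 * s * β)) := by
  rw [integral_Ioi_of_hasDerivAt_of_tendsto_nhdsGT
    (fun x hx => hasDerivAt_laplacePrimitive hs.ne' β hx)
    (integrableOn_exp_neg_mul_rpow_mul_exp_neg_div _ (by positivity) (by positivity))
    (tendsto_laplacePrimitive_nhdsGT_zero s hβ) (tendsto_laplacePrimitive_atTop hs β)]
  ring_nf

theorem integral_exp_neg_mul_mul_deriv {v v' : ℝ → ℝ} {c L : ℝ}
    (hv : ∀ x ∈ Ioi 0, HasDerivAt v (v' x) x)
    (hv'int : IntegrableOn (fun x => exp (-c * x) * v' x) (Ioi 0))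
    (hvint : IntegrableOn (fun x => exp (-c * x) * v x) (Ioi 0))
    (h₀ : Tendsto v (𝓝[>] 0) (𝓝 L))
    (htop : Tendsto (fun x => exp (-c * x) * v x) atTop (𝓝 0)) :
    ∫ x in Ioi 0, exp (-c * x) * v' x = c * (∫ x in Ioi 0, exp (-c * x) * v x) - L := by
  have hu : ∀ x ∈ Ioi (0 : ℝ), HasDerivAt (fun x => exp (-c * x)) (-c * exp (-c * x)) x :=
    fun x _ => by simpa [mul_comm] using ((hasDerivAt_id x).const_mul (-c)).exp
  have hu₀ : Tendsto (fun x => exp (-c * x) * v x) (𝓝[>] 0) (𝓝 L) := by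
    simpa using ((by fun_prop : Continuous fun x => exp (-c * x)).tendsto 0).mono_left
      nhdsWithin_le_nhds |>.mul h₀
  have hu'v : IntegrableOn (fun x => -c * exp (-c * x) * v x) (Ioi 0) := by
    simp only [mul_assoc]
    exact hvint.const_mul (-c)
  rw [integral_Ioi_mul_deriv_eq_deriv_mul hu hv hv'int hu'v hu₀ htop]
  simp only [mul_assoc, integral_const_mul]
  ring

theorem hasDerivAt_rpow_neg_half_mul_exp_neg_div (b : ℝ) {x : ℝ} (hx : 0 < x) :
    HasDerivAt (fun x => x ^ (-(1 / 2 : ℝ)) * exp (-b / x))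
      (b * (x ^ (-(5 / 2 : ℝ)) * exp (-b / x)) -
        1 / 2 * (x ^ (-(3 / 2 : ℝ)) * exp (-b / x))) x := by
  have hpow := hasDerivAt_rpow_const (p := -(1 / 2 : ℝ)) (Or.inl hx.ne')
  have hexp := ((hasDerivAt_inv hx.ne').const_mul (-b)).exp
  refine (hpow.mul (hexp.congr_of_eventuallyEq ?_)).congr_deriv ?_
  · filter_upwards with y
    ring_nf
  · have h52 : x ^ (-(1 / 2 : ℝ)) = x ^ (-(5 / 2 : ℝ)) * x ^ 2 := by
      rw [← rpow_natCast, ← rpow_add hx]; norm_num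
    have h32 : x ^ (-(1 / 2 : ℝ) - 1) = x ^ (-(3 / 2 : ℝ)) := by norm_num
    rw [h32, h52]
    field_simp
    ring_nf

theorem tendsto_rpow_mul_exp_neg_div_nhdsGT_zero (p : ℝ) {b : ℝ} (hb : 0 < b) :
    Tendsto (fun x => x ^ p * exp (-b / x)) (𝓝[>] 0) (𝓝 0) := by
  refine ((tendsto_rpow_mul_exp_neg_mul_atTop_nhds_zero (-p) b hb).comp
    tendsto_inv_nhdsGT_zero).congr' ?_
  filter_upwards [self_mem_nhdsWithin] with x (hx : 0 < x)
  simp only [Function.comp, inv_rpow hx.le, rpow_neg hx.le, inv_inv, div_eq_mul_inv, neg_mul]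

theorem tendsto_exp_neg_mul_mul_rpow_mul_exp_neg_div_atTop (p : ℝ) {c : ℝ} (hc : 0 < c)
    (b : ℝ) : Tendsto (fun x => exp (-c * x) * (x ^ p * exp (-b / x))) atTop (𝓝 0) := by
  have hexp : Tendsto (fun x => exp (-b / x)) atTop (𝓝 1) := by
    have h : Tendsto (fun x : ℝ => -b / x) atTop (𝓝 0) := tendsto_const_nhds.div_atTop tendsto_id
    simpa [Function.comp_def] using (continuous_exp.tendsto 0).comp h
  simpa [mul_comm, mul_left_comm, mul_assoc] using
    (tendsto_rpow_mul_exp_neg_mul_atTop_nhds_zero p c hc).mul hexp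


theorem integral_exp_neg_sq_mul_deriv_rpow_neg_half_mul_exp_neg_sq_div {s β : ℝ} (hs : 0 < s)
    (hβ : 0 < β) :
    ∫ x in Ioi 0, exp (-s ^ 2 * x) * (β ^ 2 * (x ^ (-(5 / 2 : ℝ)) * exp (-β ^ 2 / x)) -
      1 / 2 * (x ^ (-(3 / 2 : ℝ)) * exp (-β ^ 2 / x))) = s * √π * exp (-(2 * s * β)) := by
  have hc : 0 < s ^ 2 := by positivity
  have hb : 0 < β ^ 2 := by positivity
  have hint := fun p => integrableOn_exp_neg_mul_rpow_mul_exp_neg_div p hc hb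
  have hint' : IntegrableOn (fun x => exp (-s ^ 2 * x) * (β ^ 2 *
      (x ^ (-(5 / 2 : ℝ)) * exp (-β ^ 2 / x)) -
        1 / 2 * (x ^ (-(3 / 2 : ℝ)) * exp (-β ^ 2 / x)))) (Ioi 0) :=
    IntegrableOn.congr_fun (((hint (-(5 / 2))).const_mul (β ^ 2)).sub
      ((hint (-(3 / 2))).const_mul (1 / 2))) (fun x _ => by simp only [Pi.sub_apply]; ring)
      measurableSet_Ioi
  rw [integral_exp_neg_mul_mul_deriv
    (fun x hx => hasDerivAt_rpow_neg_half_mul_exp_neg_div (β ^ 2) hx) hint' (hint _)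
    (tendsto_rpow_mul_exp_neg_div_nhdsGT_zero _ hb)
    (tendsto_exp_neg_mul_mul_rpow_mul_exp_neg_div_atTop _ hc _),
    integral_exp_neg_sq_mul_rpow_neg_half_mul_exp_neg_sq_div hs hβ]
  field_simp
  ring

/-- For `a > 0` and `λ > 0`, the Laplace transform of
`h_a(x) = (1/(4√π)) x^{-5/2} e^{-a²/(4x)} (a² - 2x)` is `√λ e^{-a√λ}`. -/
theorem laplace_ha (a l : ℝ) (ha : 0 < a) (hl : 0 < l) :
    ∫ x in Set.Ioi (0 : ℝ),
      Real.exp (-l * x) *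
        (1 / (4 * Real.sqrt Real.pi) * x ^ (-(5 : ℝ) / 2) * Real.exp (-a ^ 2 / (4 * x)) *
          (a ^ 2 - 2 * x))
      = Real.sqrt l * Real.exp (-a * Real.sqrt l) := by
  obtain ⟨s, hs, rfl⟩ : ∃ s, 0 < s ∧ s ^ 2 = l := ⟨√l, sqrt_pos.2 hl, sq_sqrt hl.le⟩
  calc _ = (√π)⁻¹ * ∫ x in Ioi 0, exp (-s ^ 2 * x) * ((a / 2) ^ 2 *
        (x ^ (-(5 / 2 : ℝ)) * exp (-(a / 2) ^ 2 / x)) -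
          1 / 2 * (x ^ (-(3 / 2 : ℝ)) * exp (-(a / 2) ^ 2 / x))) := by
        rw [← integral_const_mul]
        refine setIntegral_congr_fun measurableSet_Ioi fun x (hx : 0 < x) => ?_
        have h32 : x ^ (-(3 / 2 : ℝ)) = x ^ (-(5 / 2 : ℝ)) * x := by
          rw [← rpow_add_one hx.ne']; norm_num
        rw [h32, neg_div 2 (5 : ℝ), show -(a / 2) ^ 2 / x = -a ^ 2 / (4 * x) by ring]
        ring
    _ = (√π)⁻¹ * (s * √π * exp (-(2 * s * (a / 2)))) := by
        rw [integral_exp_neg_sq_mul_deriv_rpow_neg_half_mul_exp_neg_sq_div hs (by positivity)]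
    _ = _ := by
        rw [sqrt_sq hs.le]
        field_simp
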